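/- Let k be an integer with k > 1. For positive integers x and y: (i) y² − k·x·y − x² = 1 holds if and only if there exists an integer n ≥ 1 with x = F_{2n} and y = F_{2n+1}; (ii) y² − k·x·y − x² = −1 holds if and only if there exists an integer n ≥ 1 with x = F_{2n−1} and y = F_{2n}. -/

import Mathlib

/-!
Write `Q(x, y) = y² - kxy - x²`. The substitution `(x, y) ↦ (y - kx, x)` inverts the recurrence and
flips the sign of `Q`, so `Q(F n, F (n + 1)) = (-1)ⁿ` (Cassini's identity). Conversely, a positive
solution of `Q(x, y) = ±1` with `y > kx` descends under this substitution to a positive solution with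
smaller `y`, and a solution with `y ≤ kx` is forced to be `(1, k) = (F 1, F 2)`; so every positive
solution is a pair of consecutive terms, and the sign of `Q` gives the parity of the index.
-/

namespace GenFib

def cassiniForm (k x y : ℤ) : ℤ := y ^ 2 - k * x * y - x ^ 2

theorem cassiniForm_sub_mul (k x y : ℤ) : cassiniForm k (y - k * x) x = -cassiniForm k x y := by
  unfold cassiniForm; ring

variable {k : ℤ} {F : ℤ → ℤ}

theorem cassiniForm_succ (hFrec : ∀ n : ℤ, F (n + 1) = k * F n + F (n - 1)) (n : ℤ) :
    cassiniForm k (F n) (F (n + 1)) = -cassiniForm k (F (n - 1)) (F n) := by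
  rw [hFrec]; unfold cassiniForm; ring

theorem cassiniForm_eq_negOnePow (hF0 : F 0 = 0) (hF1 : F 1 = 1)
    (hFrec : ∀ n : ℤ, F (n + 1) = k * F n + F (n - 1)) (n : ℤ) :
    cassiniForm k (F n) (F (n + 1)) = n.negOnePow := by
  induction n using Int.induction_on with
  | zero => simp [cassiniForm, hF0, hF1]
  | succ i ih =>
    rw [cassiniForm_succ hFrec, add_sub_cancel_right, ih, Int.negOnePow_succ, Units.val_neg]
  | pred i ih =>
    have h := cassiniForm_succ hFrec (-(i : ℤ))
    rw [ih] at h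
    rw [sub_add_cancel, Int.negOnePow_sub, Int.negOnePow_one, mul_neg_one, Units.val_neg, h, neg_neg]

theorem cassiniForm_eq_one_iff (hF0 : F 0 = 0) (hF1 : F 1 = 1)
    (hFrec : ∀ n : ℤ, F (n + 1) = k * F n + F (n - 1)) (n : ℤ) :
    cassiniForm k (F n) (F (n + 1)) = 1 ↔ Even n := by
  rw [cassiniForm_eq_negOnePow hF0 hF1 hFrec, Units.val_eq_one, Int.negOnePow_eq_one_iff]

theorem cassiniForm_eq_neg_one_iff (hF0 : F 0 = 0) (hF1 : F 1 = 1)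
    (hFrec : ∀ n : ℤ, F (n + 1) = k * F n + F (n - 1)) (n : ℤ) :
    cassiniForm k (F n) (F (n + 1)) = -1 ↔ Odd n := by
  rw [cassiniForm_eq_negOnePow hF0 hF1 hFrec, ← Units.val_one, ← Units.val_neg, Units.val_inj,
    Int.negOnePow_eq_neg_one_iff]

theorem eq_one_of_isUnit_cassiniForm_of_le {x y : ℤ} (hx : 0 < x) (hy : 0 < y)
    (hu : IsUnit (cassiniForm k x y)) (hle : y ≤ k * x) : x = 1 ∧ y = k := by
  have hneg : y * (y - k * x) ≤ 0 := mul_nonpos_of_nonneg_of_nonpos hy.le (by linarith)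
  rcases Int.isUnit_iff.1 hu with h | h <;> unfold cassiniForm at h
  · nlinarith
  · have hx1 : x = 1 := by nlinarith
    subst hx1
    have : y * (y - k) = 0 := by linear_combination h
    exact ⟨rfl, by rcases mul_eq_zero.1 this with h0 | h0 <;> omega⟩

theorem exists_eq_of_isUnit_cassiniForm (hk : 0 < k) (hF0 : F 0 = 0) (hF1 : F 1 = 1)
    (hFrec : ∀ n : ℤ, F (n + 1) = k * F n + F (n - 1)) (x y : ℤ) (hx : 0 < x) (hy : 0 < y)
    (hu : IsUnit (cassiniForm k x y)) : ∃ n : ℤ, 0 < n ∧ x = F n ∧ y = F (n + 1) := by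
  rcases le_or_gt y (k * x) with hle | hlt
  · obtain ⟨rfl, rfl⟩ := eq_one_of_isUnit_cassiniForm_of_le hx hy hu hle
    refine ⟨1, one_pos, hF1.symm, ?_⟩
    rw [hFrec, sub_self, hF0, hF1]; ring
  · have hxy : x < y := by nlinarith
    have hu' : IsUnit (cassiniForm k (y - k * x) x) := by
      rwa [cassiniForm_sub_mul, IsUnit.neg_iff]
    obtain ⟨n, hn, hxn, hyn⟩ :=
      exists_eq_of_isUnit_cassiniForm hk hF0 hF1 hFrec (y - k * x) x (by linarith) hx hu'
    refine ⟨n + 1, by omega, hyn, ?_⟩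
    rw [hFrec, add_sub_cancel_right, ← hyn, ← hxn]; ring
termination_by y.toNat
decreasing_by omega

end GenFib

open GenFib in
theorem gen_fib_integer_points (k : ℤ) (hk : 1 < k)
    (F : ℤ → ℤ) (hF0 : F 0 = 0) (hF1 : F 1 = 1)
    (hFrec : ∀ n : ℤ, F (n + 1) = k * F n + F (n - 1)) :
    ∀ x y : ℤ, 0 < x → 0 < y →
      ((y ^ 2 - k * x * y - x ^ 2 = 1 ↔
        ∃ n : ℤ, 1 ≤ n ∧ x = F (2 * n) ∧ y = F (2 * n + 1)) ∧
       (y ^ 2 - k * x * y - x ^ 2 = -1 ↔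
        ∃ n : ℤ, 1 ≤ n ∧ x = F (2 * n - 1) ∧ y = F (2 * n))) := by
  intro x y hx hy
  have descent := exists_eq_of_isUnit_cassiniForm (by omega) hF0 hF1 hFrec x y hx hy
  refine ⟨⟨fun h => ?_, ?_⟩, ⟨fun h => ?_, ?_⟩⟩
  · obtain ⟨n, hn, rfl, rfl⟩ := descent (by rw [cassiniForm, h]; exact isUnit_one)
    obtain ⟨t, rfl⟩ := (cassiniForm_eq_one_iff hF0 hF1 hFrec _).1 h
    exact ⟨t, by omega, by rw [two_mul], by rw [two_mul]⟩
  · rintro ⟨n, -, rfl, rfl⟩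
    exact (cassiniForm_eq_one_iff hF0 hF1 hFrec _).2 (even_two_mul n)
  · obtain ⟨n, hn, rfl, rfl⟩ := descent (by rw [cassiniForm, h]; exact isUnit_one.neg)
    obtain ⟨t, rfl⟩ := (cassiniForm_eq_neg_one_iff hF0 hF1 hFrec _).1 h
    exact ⟨t + 1, by omega, by congr 1; ring, by congr 1; ring⟩
  · rintro ⟨n, -, rfl, rfl⟩
    have h := (cassiniForm_eq_neg_one_iff hF0 hF1 hFrec (2 * n - 1)).2 ⟨n - 1, by ring⟩
    rwa [sub_add_cancel] at h
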